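/- arXiv:2201.00913 — 4 statements merged into one kernel-verified Lean document; each statement's English description precedes it below -/
import Mathlib

section
/- Suppose A' = (A, 0, -, +) is a finite abelian group, R ⊆ A⁴ is the relation R = {(x,y,z,u) : x + y = z + u}, and Ω is an m-ary idempotent WNU operation on A preserving R. Then there exists a natural number t such that Ω(x₁,...,x_m) = t·x₁ + ... + t·x_m for all x₁,...,x_m ∈ A. -/
/-- If `Ω` is an `m`-ary idempotent WNU operation on a finite abelian group `A`
preserving the relation `{(x,y,z,u) : x + y = z + u}`, then
`Ω(x₁,...,x_m) = t•x₁ + ... + t•x_m` for some natural number `t`. -/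
theorem wnu_on_affine_is_scaled_sum {A : Type*} [Fintype A] [AddCommGroup A]
    {m : ℕ} (Ω : (Fin m → A) → A)
    (hIdem : ∀ x : A, Ω (fun _ => x) = x)
    (hWNU : ∀ (x y : A) (i j : Fin m),
      Ω (Function.update (fun _ => x) i y) = Ω (Function.update (fun _ => x) j y))
    (hPres : ∀ x y z u : Fin m → A,
      (∀ i, x i + y i = z i + u i) → Ω x + Ω y = Ω z + Ω u) :
    ∃ t : ℕ, ∀ x : Fin m → A, Ω x = ∑ i, t • x i := by
  have h0 : Ω (fun _ => (0:A)) = 0 := hIdem 0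
  have hadd : ∀ x y : Fin m → A, Ω (x + y) = Ω x + Ω y := by
    intro x y
    have := hPres x y (x + y) (fun _ => 0) (fun i => by simp)
    rw [h0, add_zero] at this
    exact this.symm
  rcases Nat.eq_zero_or_pos m with hm | hm
  · subst hm
    refine ⟨0, fun x => ?_⟩
    have hx : x = (fun _ => (0:A)) := funext fun i => absurd i.2 (by omega)
    simp [hx, h0]
  · set i0 : Fin m := ⟨0, hm⟩
    set Ωh : (Fin m → A) →+ A := AddMonoidHom.mk' Ω hadd with hΩh
    set φ : A → A := fun a => Ω (Function.update (fun _ => (0:A)) i0 a) with hφ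
    have hdecomp : ∀ x : Fin m → A, Ω x = ∑ i, φ (x i) := by
      intro x
      have hx : x = ∑ i, Function.update (fun _ => (0:A)) i (x i) := by
        funext j
        simp [Finset.sum_apply, Function.update_apply]
      have hs : Ωh (∑ i, Function.update (fun _ => (0:A)) i (x i))
          = ∑ i, Ωh (Function.update (fun _ => (0:A)) i (x i)) := map_sum Ωh _ _
      rw [← hx] at hs
      calc Ω x = ∑ i, Ωh (Function.update (fun _ => (0:A)) i (x i)) := hs
        _ = ∑ i, φ (x i) := Finset.sum_congr rfl fun i _ => hWNU 0 (x i) i i0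
    have hmφ : ∀ a : A, m • φ a = a := by
      intro a
      have := hIdem a
      rw [hdecomp (fun _ => a)] at this
      simpa [Finset.sum_const] using this
    -- the map f : a ↦ m • a is surjective, hence bijective
    set f : A → A := fun a => m • a with hf
    have hsurj : Function.Surjective f := fun a => ⟨φ a, hmφ a⟩
    have hbij : Function.Bijective f := (Finite.surjective_iff_bijective).mp hsurj
    set σ : Equiv.Perm A := Equiv.ofBijective f hbij with hσ
    have hσapp : ∀ (n : ℕ) (a : A), (σ ^ n) a = m ^ n • a := by
      intro n
      induction n with
      | zero => intro a; simp
      | succ n ih =>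
          intro a
          rw [pow_succ, Equiv.Perm.mul_apply, ih]
          show m ^ n • (m • a) = m ^ (n+1) • a
          rw [← mul_smul, pow_succ]
    set k : ℕ := orderOf σ with hk
    have hkpos : 0 < k := orderOf_pos σ
    refine ⟨m ^ (k - 1), fun x => ?_⟩
    have hφeq : ∀ a : A, φ a = m ^ (k - 1) • a := by
      intro a
      apply hbij.injective
      show m • φ a = m • (m ^ (k - 1) • a)
      rw [hmφ, ← mul_smul, ← pow_succ', Nat.sub_add_cancel hkpos]
      have := hσapp k a
      rw [pow_orderOf_eq_one σ] at this
      simpa using this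
    rw [hdecomp x]
    exact Finset.sum_congr rfl fun i _ => hφeq (x i)
end

section
/- Suppose A' = (A, 0, -, +) is a finite abelian group and Ω is an m-ary idempotent special WNU operation on A preserving the relation {(x,y,z,u) : x + y = z + u}. Then Ω(x₁,...,x_m) = x₁ + ... + x_m for all x₁,...,x_m ∈ A. -/
/-- If `Ω` is an `m`-ary idempotent *special* WNU operation on a finite abelian
group `A` preserving the relation `{(x,y,z,u) : x + y = z + u}`, then
`Ω(x₁,...,x_m) = x₁ + ... + x_m`. -/
theorem special_wnu_on_affine_is_sum {A : Type*} [Fintype A] [AddCommGroup A]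
    {m : ℕ} (Ω : (Fin m → A) → A)
    (hIdem : ∀ x : A, Ω (fun _ => x) = x)
    (hWNU : ∀ (x y : A) (i j : Fin m),
      Ω (Function.update (fun _ => x) i y) = Ω (Function.update (fun _ => x) j y))
    (hSpecial : ∀ (x y : A) (i : Fin m),
      Ω (Function.update (fun _ => x) i (Ω (Function.update (fun _ => x) i y)))
        = Ω (Function.update (fun _ => x) i y))
    (hPres : ∀ x y z u : Fin m → A,
      (∀ i, x i + y i = z i + u i) → Ω x + Ω y = Ω z + Ω u) :
    ∀ x : Fin m → A, Ω x = ∑ i, x i := by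
  rcases Nat.eq_zero_or_pos m with hm | hm
  · subst hm
    intro x
    have hsub : ∀ a b : A, a = b := by
      intro a b
      have h1 := hIdem a
      have h2 := hIdem b
      have : (fun _ : Fin 0 => a) = (fun _ : Fin 0 => b) := by
        funext i; exact absurd i.2 (by omega)
      rw [this, h2] at h1
      exact h1.symm
    simpa using hsub (Ω x) 0
  · intro x
    have hzero : Ω 0 = 0 := hIdem 0
    have hadd : ∀ a b : Fin m → A, Ω (a + b) = Ω a + Ω b := by
      intro a b
      have := hPres a b (a + b) 0 (by intro i; simp)
      rw [hzero, add_zero] at this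
      exact this.symm
    let F : (Fin m → A) →+ A := AddMonoidHom.mk' Ω hadd
    have hF : ∀ a, F a = Ω a := fun _ => rfl
    set i0 : Fin m := ⟨0, hm⟩
    set φ : A → A := fun y => Ω (Function.update (0 : Fin m → A) i0 y) with hφ
    have hconst0 : (fun _ : Fin m => (0 : A)) = (0 : Fin m → A) := rfl
    have hφi : ∀ (y : A) (i : Fin m), Ω (Function.update (0 : Fin m → A) i y) = φ y := by
      intro y i
      rw [hφ]
      rw [← hconst0]
      exact hWNU 0 y i i0
    have hdecomp : ∀ z : Fin m → A, z = ∑ i, Function.update (0 : Fin m → A) i (z i) := by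
      intro z
      funext j
      rw [Finset.sum_apply]
      simp [Function.update_apply]
    have hsum : ∀ z : Fin m → A, Ω z = ∑ i, φ (z i) := by
      intro z
      conv_lhs => rw [hdecomp z]
      rw [← hF, map_sum]
      exact Finset.sum_congr rfl fun i _ => hφi (z i) i
    have hmφ : ∀ a : A, m • φ a = a := by
      intro a
      have := hsum (fun _ => a)
      rw [hIdem a] at this
      simp only [Finset.sum_const, Finset.card_univ, Fintype.card_fin] at this
      exact this.symm
    have hinj : Function.Injective φ := by
      intro a b hab
      have := hmφ a
      rw [hab, hmφ b] at this
      exact this.symm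
    have hφφ : ∀ a : A, φ (φ a) = φ a := by
      intro a
      have := hSpecial 0 a i0
      rw [hconst0] at this
      rw [hφ]
      simpa using this
    have hid : ∀ a : A, φ a = a := fun a => hinj (hφφ a)
    rw [hsum x]
    exact Finset.sum_congr rfl fun i _ => hid (x i)
end

section
/- Let A' = (A, 0, -, +) be a finite abelian group preserved (in the sense that the relation x+y = z+u is preserved) by an m-ary idempotent WNU operation Ω, and let p be the maximal order of an element of A'. Then m and p are coprime; in particular, for every prime q dividing the order of some element of A', q divides m - 1 when Ω(x₁,...,x_m) = x₁ + ... + x_m. -/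
/-!
Preservation of `x + y = z + u` together with `Ω(0, …, 0) = 0` makes `Ω` additive, so
`Ω x = ∑ i, Ω (Pi.single i (x i))`, and the WNU identities say that `h a := Ω (Pi.single i a)`
does not depend on `i`. Idempotency then reads `m • h a = a`: multiplication by `m` is onto,
hence bijective on the finite group `A`, so no prime dividing `m` can be the order of an element.
When `Ω` is the sum itself, idempotency is `m • a = a`, i.e. `(m - 1) • a = 0`.
-/

open Function

section

variable {A : Type*} [AddCommGroup A]

theorem coprime_exponent_of_injective_nsmul [Fintype A] {n : ℕ}
    (h : Injective fun a : A => n • a) : n.Coprime (AddMonoid.exponent A) := by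
  refine Nat.coprime_of_dvd fun q hq hqn hqe => ?_
  have := Fact.mk hq
  obtain ⟨a, ha⟩ := exists_prime_addOrderOf_dvd_card q (hqe.trans AddGroup.exponent_dvd_card)
  have hna : n • a = n • (0 : A) := by
    rw [nsmul_zero, ← addOrderOf_dvd_iff_nsmul_eq_zero, ha]
    exact hqn
  have ha0 : a = 0 := h hna
  exact hq.one_lt.ne' (by rw [← ha, ha0, addOrderOf_zero])

theorem addOrderOf_dvd_sub_one_of_nsmul_eq_self {n : ℕ} {a : A} (h : n • a = a) :
    addOrderOf a ∣ n - 1 := by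
  cases n with
  | zero => exact dvd_zero _
  | succ k =>
    rw [succ_nsmul, add_eq_right] at h
    exact addOrderOf_dvd_of_nsmul_eq_zero h

variable {ι : Type*} {Ω : (ι → A) → A}

theorem map_add_of_preserves_add_eq_add (hzero : Ω 0 = 0)
    (hPres : ∀ x y z u : ι → A, (∀ i, x i + y i = z i + u i) → Ω x + Ω y = Ω z + Ω u)
    (x y : ι → A) : Ω (x + y) = Ω x + Ω y := by
  simpa [hzero] using (hPres x y (x + y) 0 fun i => by simp).symm

theorem card_nsmul_apply_single [Fintype ι] [DecidableEq ι] (hadd : ∀ x y, Ω (x + y) = Ω x + Ω y)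
    (hsingle : ∀ (a : A) (i j : ι), Ω (Pi.single i a) = Ω (Pi.single j a)) (i : ι) (a : A) :
    Fintype.card ι • Ω (Pi.single i a) = Ω fun _ => a := by
  let f : (ι → A) →+ A := AddMonoidHom.mk' Ω hadd
  calc Fintype.card ι • Ω (Pi.single i a) = ∑ j, f (Pi.single j a) := by
        simp [f, hsingle a _ i]
    _ = f (∑ j, Pi.single j a) := (map_sum f _ _).symm
    _ = Ω fun _ => a := by rw [Finset.univ_sum_single]; rfl

end

/-- Let `A` be a finite abelian group whose relation `x + y = z + u` is preserved
by an `m`-ary idempotent WNU operation `Ω`, and let `p` (the exponent of the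
group) be the maximal order of an element. Then `m` and `p` are coprime; in
particular, if `Ω(x₁,...,x_m) = x₁ + ... + x_m`, then every prime `q` dividing
the order of some element of `A` divides `m - 1`. -/
theorem wnu_arity_coprime_exponent {A : Type*} [Fintype A] [AddCommGroup A]
    {m : ℕ} (Ω : (Fin m → A) → A)
    (hIdem : ∀ x : A, Ω (fun _ => x) = x)
    (hWNU : ∀ (x y : A) (i j : Fin m),
      Ω (Function.update (fun _ => x) i y) = Ω (Function.update (fun _ => x) j y))
    (hPres : ∀ x y z u : Fin m → A,
      (∀ i, x i + y i = z i + u i) → Ω x + Ω y = Ω z + Ω u) :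
    Nat.Coprime m (AddMonoid.exponent A) ∧
      ((∀ x : Fin m → A, Ω x = ∑ i, x i) →
        ∀ q : ℕ, q.Prime → (∃ a : A, q ∣ addOrderOf a) → q ∣ m - 1) := by
  refine ⟨?_, fun hSum q _ ⟨a, hqa⟩ => ?_⟩
  · have hadd := map_add_of_preserves_add_eq_add (hIdem 0) hPres
    have hsurj : Surjective fun a : A => m • a := by
      intro a
      cases m with
      | zero =>
        -- a nullary idempotent operation forces `A` to be trivial
        refine ⟨0, ?_⟩
        show 0 • (0 : A) = a
        rw [zero_nsmul, ← hIdem a, Subsingleton.elim (fun _ : Fin 0 => a) fun _ => 0, hIdem 0]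
      | succ n =>
        refine ⟨Ω (Pi.single 0 a), ?_⟩
        simpa [hIdem] using card_nsmul_apply_single hadd (hWNU 0) 0 a
    exact coprime_exponent_of_injective_nsmul (Finite.injective_iff_surjective.mpr hsurj)
  · have hma : m • a = a := by simpa [hSum] using hIdem a
    exact hqa.trans (addOrderOf_dvd_sub_one_of_nsmul_eq_self hma)
end

section
/- A finite algebra is polynomially complete if and only if it has the ternary discriminator as a polynomial operation, where the ternary discriminator t satisfies t(x,y,z) = z if x = y and t(x,y,z) = x if x ≠ y. -/
/-- Polynomial operations of an algebra `(A, F)`: the clone generated by the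
basic operations `F` together with all constants on `A` (projections, constants,
closed under superposition with basic operations). -/
inductive PolyOp {A : Type*} {ι : Type*} {ar : ι → ℕ}
    (F : ∀ i : ι, (Fin (ar i) → A) → A) :
    ∀ {n : ℕ}, ((Fin n → A) → A) → Prop
  | proj {n : ℕ} (k : Fin n) : PolyOp F (fun x => x k)
  | const {n : ℕ} (a : A) : PolyOp F (fun _ => a)
  | comp {n : ℕ} (i : ι) (g : Fin (ar i) → (Fin n → A) → A)
      (hg : ∀ j, PolyOp F (g j)) :
      PolyOp F (fun x => F i (fun j => g j x))

/-- Polynomial operations are closed under general superposition. -/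
theorem PolyOp.comp' {A : Type*} {ι : Type*} {ar : ι → ℕ}
    {F : ∀ i : ι, (Fin (ar i) → A) → A} {m n : ℕ} {h : (Fin m → A) → A}
    (hh : PolyOp F h) (g : Fin m → (Fin n → A) → A) (hg : ∀ j, PolyOp F (g j)) :
    PolyOp F (fun x => h (fun j => g j x)) := by
  induction hh with
  | proj k => exact hg k
  | const a => exact @PolyOp.const _ _ _ _ _ 0 a
  | comp i g' hg' ih => exact .comp i (fun j x => g' j (fun k => g k x)) ih

/-- A finite algebra is polynomially complete (every finitary operation on its
universe is a polynomial operation) iff it has the ternary discriminator as a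
polynomial operation. -/
theorem polynomially_complete_iff_discriminator {A : Type*} {ι : Type*}
    [Finite A] {ar : ι → ℕ} (F : ∀ i : ι, (Fin (ar i) → A) → A) :
    (∀ (n : ℕ) (f : (Fin n → A) → A), PolyOp F f) ↔
      (∃ t : (Fin 3 → A) → A, PolyOp F t ∧
        ∀ x : Fin 3 → A, (x 0 = x 1 → t x = x 2) ∧ (x 0 ≠ x 1 → t x = x 0)) := by
  classical
  constructor
  · intro h
    refine ⟨fun x => if x 0 = x 1 then x 2 else x 0, h 3 _, ?_⟩
    intro x
    constructor <;> intro hx <;> simp [hx]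
  · rintro ⟨t, ht, hts⟩
    rcases isEmpty_or_nonempty A with hA | hA
    · intro n f
      match n with
      | 0 => exact (hA.false (f Fin.elim0)).elim
      | (n+1) =>
        have hf : f = fun x => x 0 := funext fun x => (hA.false (x 0)).elim
        rw [hf]; exact .proj 0
    · obtain ⟨c⟩ := hA
      have := Fintype.ofFinite A
      -- composition with the discriminator
      have tcomp : ∀ {n : ℕ} (g₀ g₁ g₂ : (Fin n → A) → A), PolyOp F g₀ →
          PolyOp F g₁ → PolyOp F g₂ → PolyOp F (fun x => t ![g₀ x, g₁ x, g₂ x]) := by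
        intro n g₀ g₁ g₂ h0 h1 h2
        have h := PolyOp.comp' ht ![g₀, g₁, g₂] (by
          intro j; fin_cases j <;> simpa)
        have heq : (fun x : Fin n → A => t ![g₀ x, g₁ x, g₂ x])
            = fun x => t fun j => ![g₀, g₁, g₂] j x := by
          funext x; congr 1; funext j; fin_cases j <;> simp
        rw [heq]; exact h
      -- the quaternary switch: value w if u = v, value z otherwise
      have hQ1 : ∀ u v w z : A, u = v → t ![t ![u, v, w], t ![u, v, z], z] = w := by
        intro u v w z huv
        subst huv
        have e1 := (hts ![u, u, w]).1 (by simp)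
        have e2 := (hts ![u, u, z]).1 (by simp)
        simp only [Matrix.cons_val_two, Matrix.tail_cons, Matrix.head_cons] at e1 e2
        rw [e1, e2]
        rcases eq_or_ne w z with h | h
        · have := (hts ![w, z, z]).1 (by simpa)
          simpa using this.trans h.symm
        · have := (hts ![w, z, z]).2 (by simpa)
          simpa using this
      have hQ2 : ∀ u v w z : A, u ≠ v → t ![t ![u, v, w], t ![u, v, z], z] = z := by
        intro u v w z huv
        have e1 := (hts ![u, v, w]).2 (by simpa)
        have e2 := (hts ![u, v, z]).2 (by simpa)
        simp only [Matrix.cons_val_zero] at e1 e2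
        rw [e1, e2]
        have := (hts ![u, u, z]).1 (by simp)
        simpa using this
      intro n
      induction n with
      | zero =>
        intro f
        have hf : f = fun _ => f Fin.elim0 := by
          funext x; congr; funext i; exact i.elim0
        rw [hf]; exact @PolyOp.const _ _ _ _ _ 0 _
      | succ n ih =>
        intro f
        have key : ∀ l : List A, ∃ g : (Fin (n+1) → A) → A, PolyOp F g ∧
            ∀ x : Fin (n+1) → A, x 0 ∈ l → g x = f x := by
          intro l
          induction l with
          | nil => exact ⟨fun _ => c, @PolyOp.const _ _ _ _ _ 0 c, by simp⟩
          | cons a l ihl =>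
            obtain ⟨g, hg, hgs⟩ := ihl
            refine ⟨fun x => t ![t ![x 0, a, f (Fin.cons a (Fin.tail x))],
                t ![x 0, a, g x], g x], ?_, ?_⟩
            · refine tcomp _ _ _ ?_ (tcomp _ _ _ (.proj 0) (@PolyOp.const _ _ _ _ _ 0 a) hg) hg
              refine tcomp _ _ _ (.proj 0) (@PolyOp.const _ _ _ _ _ 0 a) ?_
              exact PolyOp.comp' (ih (fun y => f (Fin.cons a y)))
                (fun i x => x i.succ) (fun i => .proj i.succ)
            · intro x hx
              show t ![t ![x 0, a, f (Fin.cons a (Fin.tail x))],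
                t ![x 0, a, g x], g x] = f x
              rcases eq_or_ne (x 0) a with h | h
              · rw [hQ1 _ _ _ _ h]
                rw [← h, Fin.cons_self_tail]
              · rw [hQ2 _ _ _ _ h]
                exact hgs x (by simpa [h] using hx)
        obtain ⟨g, hg, hgs⟩ := key Finset.univ.toList
        have hf : f = g := funext fun x => (hgs x (by simp)).symm
        rw [hf]; exact hg
end
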